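/- A sequence (x_n) in a multi-metric space M̃ = ⋃_{i=1}^m Mᵢ converges to some point x ∈ M̃ if and only if there exist an index N and an integer k with 1 ≤ k ≤ m such that the tail {x_n : n ≥ N} lies in M_k and converges to x in the metric space (M_k, ρ_k). -/

import Mathlib

/-- `ρ` is a metric on the subset `S` of `M`. -/
def IsMetricOn {M : Type*} (S : Set M) (ρ : M → M → ℝ) : Prop :=
  (∀ x ∈ S, ∀ y ∈ S, 0 ≤ ρ x y) ∧
  (∀ x ∈ S, ∀ y ∈ S, (ρ x y = 0 ↔ x = y)) ∧
  (∀ x ∈ S, ∀ y ∈ S, ρ x y = ρ y x) ∧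
  (∀ x ∈ S, ∀ y ∈ S, ∀ z ∈ S, ρ x z ≤ ρ x y + ρ y z)

/-- A sequence in the multi-metric space `⋃ i, Ms i` converges to `x0`:
some tail lies in a single part `Ms k` containing `x0` and converges there
in the metric `ρ k`. -/
def MultiConvergesTo {M : Type*} {m : ℕ} (Ms : Fin m → Set M)
    (ρ : Fin m → M → M → ℝ) (x : ℕ → M) (x0 : M) : Prop :=
  ∃ N k, x0 ∈ Ms k ∧ (∀ n ≥ N, x n ∈ Ms k) ∧
    ∀ ε > 0, ∃ N', ∀ n ≥ N', ρ k (x n) x0 < ε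

/-- A Cauchy sequence in the multi-metric space `⋃ i, Ms i`. -/
def MultiCauchy {M : Type*} {m : ℕ} (Ms : Fin m → Set M)
    (ρ : Fin m → M → M → ℝ) (x : ℕ → M) : Prop :=
  ∀ ε > 0, ∃ N s, ∀ p ≥ N, ∀ q ≥ N,
    x p ∈ Ms s ∧ x q ∈ Ms s ∧ ρ s (x p) (x q) < ε

/-- The multi-metric space is completed: every Cauchy sequence converges. -/
def MultiCompleted {M : Type*} {m : ℕ} (Ms : Fin m → Set M)
    (ρ : Fin m → M → M → ℝ) : Prop :=
  ∀ x : ℕ → M, MultiCauchy Ms ρ x → ∃ x0, MultiConvergesTo Ms ρ x x0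

/-! If for every `ε > 0` the sequence is `ε`-close to `x0` inside some part `Ms i`, then, as
there are only finitely many parts, one part `Ms k` serves for all `ε`: otherwise each part
fails at some `εᵢ > 0`, and all of them fail at the least `εᵢ`. -/

theorem Finite.exists_forall_pos_of_forall_pos_exists {ι α : Type*} [Finite ι] [Nonempty ι]
    [LinearOrder α] [Zero α] {P : ι → α → Prop}
    (hmono : ∀ i ε ε', ε ≤ ε' → P i ε → P i ε') (h : ∀ ε > 0, ∃ i, P i ε) :
    ∃ i, ∀ ε > 0, P i ε := by
  by_contra! hfail
  choose ε hεpos hεfail using hfail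
  obtain ⟨j, hj⟩ := Finite.exists_min ε
  obtain ⟨i, hi⟩ := h (ε j) (hεpos j)
  exact hεfail i (hmono i _ _ (hj i) hi)

theorem multiConvergesTo_iff_tail_general {M : Type*} {m : ℕ} (Ms : Fin m → Set M)
    (ρ : Fin m → M → M → ℝ) (x : ℕ → M) (x0 : M) :
    (∀ ε > 0, ∃ N i, x0 ∈ Ms i ∧ ∀ n ≥ N, x n ∈ Ms i ∧ ρ i (x n) x0 < ε) ↔
    MultiConvergesTo Ms ρ x x0 := by
  constructor
  · intro h
    have : Nonempty (Fin m) := let ⟨_, i, _⟩ := h 1 one_pos; ⟨i⟩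
    let CloseIn (i : Fin m) (ε : ℝ) : Prop :=
      ∃ N, x0 ∈ Ms i ∧ ∀ n ≥ N, x n ∈ Ms i ∧ ρ i (x n) x0 < ε
    have hmono : ∀ i ε ε', ε ≤ ε' → CloseIn i ε → CloseIn i ε' :=
      fun i ε ε' hεε' ⟨N, hx0, hN⟩ =>
        ⟨N, hx0, fun n hn => ⟨(hN n hn).1, (hN n hn).2.trans_le hεε'⟩⟩
    obtain ⟨k, hk⟩ := Finite.exists_forall_pos_of_forall_pos_exists hmono
      fun ε hε => exists_comm.mp (h ε hε)
    obtain ⟨N, hx0, hN⟩ := hk 1 one_pos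
    exact ⟨N, k, hx0, fun n hn => (hN n hn).1, fun ε hε =>
      let ⟨N', _, hN'⟩ := hk ε hε; ⟨N', fun n hn => (hN' n hn).2⟩⟩
  · rintro ⟨N, k, hx0, htail, hconv⟩ ε hε
    obtain ⟨N', hN'⟩ := hconv ε hε
    exact ⟨max N N', k, hx0, fun n hn =>
      ⟨htail n (le_of_max_le_left hn), hN' n (le_of_max_le_right hn)⟩⟩

/-- Theorem 2.2: a sequence in a multi-metric space is convergent (to `x0`) if and
only if some tail lies in a single part `Ms k` and converges to `x0` there. -/
theorem multiConvergesTo_iff_tail {M : Type*} {m : ℕ} (Ms : Fin m → Set M)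
    (ρ : Fin m → M → M → ℝ) (hρ : ∀ i, IsMetricOn (Ms i) (ρ i))
    (hcov : ∀ y : M, ∃ i, y ∈ Ms i) (x : ℕ → M) (x0 : M) :
    (∀ ε > 0, ∃ N i, x0 ∈ Ms i ∧ ∀ n ≥ N, x n ∈ Ms i ∧ ρ i (x n) x0 < ε) ↔
    MultiConvergesTo Ms ρ x x0 :=
  multiConvergesTo_iff_tail_general Ms ρ x x0
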